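/- Let q ≥ 2, let 𝒯 be an SLP representing T with |T| ≥ q, and let X_{i_1}, …, X_{i_m} be variables such that the node ξ(1,q) is labeled X_{i_1} and, for each 2 ≤ j ≤ m, X_{i_j} is a right q-gram neighbor of X_{i_{j-1}}. Let W = T([1:q-1]) label(X_{i_1}) label(X_{i_2}) ⋯ label(X_{i_m}), and for 1 ≤ j ≤ m let B_j denote the set of positions of W lying in the block label(X_{i_j}) of this concatenation. Then for every string P of length q and every 1 ≤ j ≤ m, the number of occurrences k ∈ Occ(W,P) with ending position k+q-1 in B_j equals |Occ(t_{i_j}, P)|. Consequently, the weighted q-gram frequencies on W, where an occurrence of a q-gram ending in B_j is weighted by vOcc(X_{i_j}), equal the weighted q-gram frequencies of the strings t_{i_1}, …, t_{i_m} where each q-gram occurrence in t_{i_j} is weighted by vOcc(X_{i_j}): Σ_{j=1}^m vOcc(X_{i_j}) · |{k ∈ Occ(W,P) : k+q-1 ∈ B_j}| = Σ_{j=1}^m vOcc(X_{i_j}) · |Occ(t_{i_j}, P)|. -/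

import Mathlib

/-- A straight line program over alphabet `α`: variables are `Fin n` (variable
`X_i` of the paper corresponds to index `i-1`), each with either a terminal
rule (a single character) or a nonterminal rule `X_i → X_j X_k` with `j,k < i`. -/
structure SLP (α : Type) where
  n : ℕ
  npos : 0 < n
  rule : Fin n → α ⊕ (Fin n × Fin n)
  wf : ∀ i jk, rule i = Sum.inr jk → jk.1 < i ∧ jk.2 < i

namespace SLP

variable {α : Type}

/-- the string `val(X_i)` derived by a variable -/
def val (S : SLP α) (i : Fin S.n) : List α :=
  match h : S.rule i with
  | Sum.inl a => [a]
  | Sum.inr jk =>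
    have _h1 := (S.wf i jk h).1
    have _h2 := (S.wf i jk h).2
    S.val jk.1 ++ S.val jk.2
termination_by i.val

/-- the last variable `X_n` -/
def lastIdx (S : SLP α) : Fin S.n := ⟨S.n - 1, Nat.sub_lt S.npos Nat.one_pos⟩

/-- the string `T` represented by the SLP -/
def text (S : SLP α) : List α := S.val S.lastIdx

/-- `T([i:j])`: the (1-based, inclusive) substring of a string -/
def substr (T : List α) (i j : ℕ) : List α := (T.drop (i - 1)).take (j + 1 - i)

/-- `pre(T,q)` -/
def spre (T : List α) (q : ℕ) : List α := T.take q

/-- `suf(T,q)` -/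
def ssuf (T : List α) (q : ℕ) : List α := T.drop (T.length - q)

/-- `pre([b:e],q)` for intervals of positions -/
def ipre (b e q : ℕ) : Finset ℕ := Finset.Icc b (min (b + q - 1) e)

/-- `suf([b:e],q)` for intervals of positions -/
def isuf (b e q : ℕ) : Finset ℕ := Finset.Icc (max b (e + 1 - q)) e

/-- `Occ(T,P)`: the set of (1-based) occurrences of `P` in `T` -/
def Occ [DecidableEq α] (T P : List α) : Finset ℕ :=
  (Finset.Icc 1 T.length).filter fun k => substr T k (k + P.length - 1) = P

/-- the multiset of labels of the nodes of the derivation tree rooted at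
a node labeled `X_i` -/
def occsFrom (S : SLP α) (i : Fin S.n) : Multiset (Fin S.n) :=
  match h : S.rule i with
  | Sum.inl _ => {i}
  | Sum.inr jk =>
    have _h1 := (S.wf i jk h).1
    have _h2 := (S.wf i jk h).2
    i ::ₘ (S.occsFrom jk.1 + S.occsFrom jk.2)
termination_by i.val

/-- `vOcc(X_i)`: the number of nodes of the derivation tree labeled `X_i` -/
def vOcc (S : SLP α) (i : Fin S.n) : ℕ := (S.occsFrom S.lastIdx).count i

/-- the string `t_i = suf(val(X_{ℓ(i)}),q-1) pre(val(X_{r(i)}),q-1)`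
(and `[]` for a terminal rule) -/
def tstr (S : SLP α) (q : ℕ) (i : Fin S.n) : List α :=
  match S.rule i with
  | Sum.inl _ => []
  | Sum.inr jk => ssuf (S.val jk.1) (q - 1) ++ spre (S.val jk.2) (q - 1)

/-- `label(X_i) = t_i([q:|t_i|])` -/
def labelStr (S : SLP α) (q : ℕ) (i : Fin S.n) : List α := (S.tstr q i).drop (q - 1)

/-- Nodes of the derivation tree are represented by the path from the root
(`false` = go to left child, `true` = go to right child).  `descend i p`
returns the label of the node reached from a node labeled `X_i` by path `p`. -/
def descend (S : SLP α) : Fin S.n → List Bool → Option (Fin S.n)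
  | i, [] => some i
  | i, b :: p =>
    match S.rule i with
    | Sum.inl _ => none
    | Sum.inr jk => S.descend (if b then jk.2 else jk.1) p

/-- the label of the node of the derivation tree reached by path `p` from the root -/
def nodeVar (S : SLP α) (p : List Bool) : Option (Fin S.n) := S.descend S.lastIdx p

/-- `p` is a valid node of the derivation tree -/
def IsNode (S : SLP α) (p : List Bool) : Prop := (S.nodeVar p).isSome

/-- the 0-based offset in `val(X_i)` of the part derived below path `p` -/
def offsetFrom (S : SLP α) : Fin S.n → List Bool → ℕ
  | _, [] => 0
  | i, b :: p =>
    match S.rule i with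
    | Sum.inl _ => 0
    | Sum.inr jk =>
      if b then (S.val jk.1).length + S.offsetFrom jk.2 p
      else S.offsetFrom jk.1 p

/-- the 0-based offset in `T` of the interval derived by node `p` -/
def offset (S : SLP α) (p : List Bool) : ℕ := S.offsetFrom S.lastIdx p

/-- `itv(v)`: the (1-based) interval of positions of `T` derived by node `p` -/
def itv (S : SLP α) (p : List Bool) : Finset ℕ :=
  match S.nodeVar p with
  | some i => Finset.Icc (S.offset p + 1) (S.offset p + (S.val i).length)
  | none => ∅

/-- `p = ξ(b,e)`: `p` is the deepest node whose interval contains `[b:e]`,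
i.e. `itv(p) ⊇ [b:e]` and no proper descendant of `p` satisfies this. -/
def Stabs (S : SLP α) (p : List Bool) (b e : ℕ) : Prop :=
  S.IsNode p ∧ Finset.Icc b e ⊆ S.itv p ∧
  ∀ p' : List Bool, p <+: p' → p ≠ p' → S.IsNode p' → ¬ Finset.Icc b e ⊆ S.itv p'

/-- `X_j` is a right `q`-gram neighbor of `X_i` -/
def RightNbr (S : SLP α) (q : ℕ) (i j : Fin S.n) : Prop :=
  i ≠ j ∧ ∃ u p p', 1 ≤ u ∧ u + q ≤ S.text.length ∧
    S.Stabs p u (u + q - 1) ∧ S.nodeVar p = some i ∧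
    S.Stabs p' (u + 1) (u + q) ∧ S.nodeVar p' = some j

/-- `lm_q(X_i)`: the last variable of length `≥ q` on the sequence `i, ℓ(i), ℓ(ℓ(i)), …`
(meaningful when `|val(X_i)| ≥ q`) -/
def lm (S : SLP α) (q : ℕ) (i : Fin S.n) : Fin S.n :=
  match h : S.rule i with
  | Sum.inl _ => i
  | Sum.inr jk =>
    have := (S.wf i jk h).1
    if (S.val jk.1).length < q then i else S.lm q jk.1
termination_by i.val

/-- `rm_q(X_i)`: the last variable of length `≥ q` on the sequence `i, r(i), r(r(i)), …` -/
def rm (S : SLP α) (q : ℕ) (i : Fin S.n) : Fin S.n :=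
  match h : S.rule i with
  | Sum.inl _ => i
  | Sum.inr jk =>
    have := (S.wf i jk h).2
    if (S.val jk.2).length < q then i else S.rm q jk.2
termination_by i.val

/-- `lm_q` returning `null` (`none`) when `|val(X_i)| < q` -/
def lmOpt (S : SLP α) (q : ℕ) (i : Fin S.n) : Option (Fin S.n) :=
  if (S.val i).length < q then none else some (S.lm q i)

/-- `rm_q` returning `null` (`none`) when `|val(X_i)| < q` -/
def rmOpt (S : SLP α) (q : ℕ) (i : Fin S.n) : Option (Fin S.n) :=
  if (S.val i).length < q then none else some (S.rm q i)

/-- `LSpine S i k`: `k` occurs in the sequence `i, ℓ(i), ℓ(ℓ(i)), …`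
(the leftmost path of the derivation subtree rooted at a node labeled `X_i`) -/
inductive LSpine (S : SLP α) : Fin S.n → Fin S.n → Prop
  | refl (i : Fin S.n) : LSpine S i i
  | step {i k : Fin S.n} {jk : Fin S.n × Fin S.n} :
      S.rule i = Sum.inr jk → LSpine S jk.1 k → LSpine S i k

end SLP

/-! The string `t_i` of a nonterminal node is the part of `T` within distance `q - 1` of the
node's split point, and the node `ξ(u, u+q-1)` has its split point inside `[u, u+q-1)`. If `X_j`
is a right `q`-gram neighbor of `X_i`, witnessed at `u`, the two stabbing nodes are nested, and in
either nesting the window of `X_i` ends at `u+q-1` while that of `X_j` starts at `u+1`: the last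
`q-1` letters of `t_i` are the first `q-1` letters of `t_j`. Along the path, the `q-1` letters of
`W` preceding the block of `label(X_{i_j})` therefore complete it to `t_{i_j}`, so the `q`-grams
of `W` ending in that block are exactly the `q`-grams of `t_{i_j}`. -/

namespace SLP

variable {α : Type}

section Strings

lemma length_substr (T : List α) {a b : ℕ} (ha : 1 ≤ a) (hb : b ≤ T.length) :
    (substr T a b).length = b + 1 - a := by
  rw [substr, List.length_take, List.length_drop]
  omega

lemma substr_append (T : List α) {a c b : ℕ} (ha : 1 ≤ a) (hac : a ≤ c + 1)
    (hcb : c ≤ b) : substr T a b = substr T a c ++ substr T (c + 1) b := by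
  rw [substr, substr, substr, show b + 1 - a = (c + 1 - a) + (b + 1 - (c + 1)) by omega,
    List.take_add, List.drop_drop, show a - 1 + (c + 1 - a) = c + 1 - 1 by omega]

lemma ssuf_substr (T : List α) {a b n : ℕ} (ha : 1 ≤ a) (hab : a ≤ b + 1) (hb : b ≤ T.length)
    (hn : n ≤ b + 1 - a) : ssuf (substr T a b) n = substr T (b + 1 - n) b := by
  rw [ssuf, length_substr T ha hb]
  simp only [substr]
  rw [List.drop_take, List.drop_drop,
    show a - 1 + (b + 1 - a - n) = b + 1 - n - 1 by omega,
    show b + 1 - a - (b + 1 - a - n) = b + 1 - (b + 1 - n) by omega]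

lemma spre_substr (T : List α) {a b n : ℕ} (ha : 1 ≤ a) :
    spre (substr T a b) n = substr T a (min (a + n - 1) b) := by
  rw [spre, substr, substr, List.take_take]
  congr 1
  omega

lemma ssuf_spre (A : List α) (n : ℕ) : ssuf (spre A n) n = spre A n := by
  rw [ssuf, Nat.sub_eq_zero_of_le (by simp [spre]), List.drop_zero]

lemma ssuf_append_of_le_length (A B : List α) {n : ℕ} (h : n ≤ B.length) :
    ssuf (A ++ B) n = ssuf B n := by
  rw [ssuf, ssuf, List.length_append, show A.length + B.length - n = A.length + (B.length - n)
    by omega, List.drop_length_add_append]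

lemma ssuf_append_ssuf (A B : List α) (n : ℕ) :
    ssuf (A ++ B) n = ssuf (ssuf A n ++ B) n := by
  rcases le_or_gt n A.length with h | h
  · conv_lhs => rw [← List.take_append_drop (A.length - n) A, List.append_assoc]
    exact ssuf_append_of_le_length _ _ (by simp; omega)
  · rw [show ssuf A n = A by rw [ssuf, Nat.sub_eq_zero_of_le h.le, List.drop_zero]]

lemma mem_Occ_iff [DecidableEq α] {T P : List α} {k : ℕ} (hP : 1 ≤ P.length) (hk : 1 ≤ k) :
    k ∈ Occ T P ↔ k + P.length - 1 ≤ T.length ∧ (T.drop (k - 1)).take P.length = P := by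
  rw [Occ, Finset.mem_filter, Finset.mem_Icc, substr, show k + P.length - 1 + 1 - k = P.length
    by omega]
  constructor
  · rintro ⟨-, hm⟩
    refine ⟨?_, hm⟩
    have hl := congrArg List.length hm
    rw [List.length_take, List.length_drop] at hl
    omega
  · rintro ⟨hle, hm⟩
    exact ⟨⟨hk, by omega⟩, hm⟩

lemma card_filter_Occ_append [DecidableEq α] {q : ℕ} (V X Y P : List α)
    (hP : P.length = q) (hq : 1 ≤ q) (hV : q - 1 ≤ V.length) :
    ((Occ (V ++ (X ++ Y)) P).filter
        (fun k => k + q - 1 ∈ Finset.Icc (V.length + 1) (V.length + X.length))).card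
      = (Occ (ssuf V (q - 1) ++ X) P).card := by
  subst hP
  set t := ssuf V (P.length - 1) ++ X
  set d := V.length - (P.length - 1)
  have htl : t.length = (P.length - 1) + X.length := by simp [t, ssuf]; omega
  have hsplit : V ++ (X ++ Y) = V.take d ++ (t ++ Y) := by
    conv_lhs => rw [← List.take_append_drop d V]
    simp only [t, ssuf, d, List.append_assoc]
  have hshift : ∀ k, 1 ≤ k → k + P.length - 1 ≤ t.length →
      ((V ++ (X ++ Y)).drop (k + d - 1)).take P.length = (t.drop (k - 1)).take P.length := by
    intro k h1 h2
    have hdl : (V.take d).length = d := by rw [List.length_take]; omega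
    rw [hsplit, show k + d - 1 = (V.take d).length + (k - 1) by omega,
      List.drop_length_add_append, List.drop_append_of_le_length (by omega),
      List.take_append_of_le_length (by rw [List.length_drop]; omega)]
  have hlen : (V ++ (X ++ Y)).length = V.length + X.length + Y.length := by
    simp only [List.length_append]; omega
  symm
  rw [← Finset.card_map ⟨(· + d), add_left_injective d⟩]
  congr 1
  ext k
  simp only [Finset.mem_map, Function.Embedding.coeFn_mk, Finset.mem_filter, Finset.mem_Icc]
  constructor
  · rintro ⟨k, hk, rfl⟩
    have hk1 : 1 ≤ k := (Finset.mem_Icc.mp (Finset.mem_filter.mp hk).1).1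
    rw [mem_Occ_iff hq hk1] at hk
    rw [mem_Occ_iff hq (by omega), hshift k hk1 hk.1]
    exact ⟨⟨by omega, hk.2⟩, by omega, by omega⟩
  · rintro ⟨hk, hlow, hhigh⟩
    rw [mem_Occ_iff hq (by omega)] at hk
    refine ⟨k - d, ?_, by omega⟩
    have hshift' := hshift (k - d) (by omega) (by omega)
    rw [show k - d + d - 1 = k - 1 by omega] at hshift'
    rw [mem_Occ_iff hq (by omega), ← hshift']
    exact ⟨by omega, hk.2⟩

lemma exists_flatMap_range_eq_append (g : ℕ → List α) {i m : ℕ} (h : i < m) :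
    ∃ Y, (List.range m).flatMap g = (List.range i).flatMap g ++ (g i ++ Y) := by
  obtain ⟨r, rfl⟩ := Nat.exists_eq_add_of_lt h
  refine ⟨((List.range r).map (i + 1 + ·)).flatMap g, ?_⟩
  rw [show i + r + 1 = i + 1 + r by omega, List.range_add, List.range_succ,
    List.flatMap_append, List.flatMap_append, List.flatMap_singleton, List.append_assoc]

lemma length_flatMap_range_succ (g : ℕ → List α) (i : ℕ) :
    ((List.range i).flatMap fun k => g (k + 1)).length =
      ∑ k ∈ Finset.Ico 1 (i + 1), (g k).length := by
  induction i with
  | zero => rfl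
  | succ i ih =>
    rw [List.range_succ, List.flatMap_append, List.length_append, ih,
      Finset.sum_Ico_succ_top (by omega : 1 ≤ i + 1)]
    simp

lemma ssuf_chain_append_drop (t : ℕ → List α) {n m : ℕ}
    (hchain : ∀ j, 1 ≤ j → j < m → ssuf (t j) n = spre (t (j + 1)) n) :
    ∀ i, i < m →
      ssuf (spre (t 1) n ++ (List.range i).flatMap fun k => (t (k + 1)).drop n) n
        ++ (t (i + 1)).drop n = t (i + 1)
  | 0, _ => by
    rw [List.range_zero, List.flatMap_nil, List.append_nil, ssuf_spre]
    exact List.take_append_drop _ _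
  | i + 1, hi => by
    rw [List.range_succ, List.flatMap_append, List.flatMap_singleton, ← List.append_assoc,
      ssuf_append_ssuf, ssuf_chain_append_drop t hchain i (by omega), hchain (i + 1) (by omega) hi]
    exact List.take_append_drop _ _

lemma card_filter_Occ_chain [DecidableEq α] (t : ℕ → List α) {q m j : ℕ} {P : List α}
    (hP : P.length = q) (hq : 1 ≤ q) (ht : q - 1 ≤ (t 1).length)
    (hchain : ∀ j, 1 ≤ j → j < m → ssuf (t j) (q - 1) = spre (t (j + 1)) (q - 1))
    (hj : 1 ≤ j) (hjm : j ≤ m) :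
    ((Occ (spre (t 1) (q - 1) ++ (List.range m).flatMap fun k => (t (k + 1)).drop (q - 1))
        P).filter (fun k => k + q - 1 ∈ Finset.Icc
          ((q - 1) + (∑ k ∈ Finset.Ico 1 j, ((t k).drop (q - 1)).length) + 1)
          ((q - 1) + ∑ k ∈ Finset.Icc 1 j, ((t k).drop (q - 1)).length))).card
      = (Occ (t j) P).card := by
  obtain ⟨i, rfl⟩ : ∃ i, j = i + 1 := ⟨j - 1, by omega⟩
  obtain ⟨Y, hY⟩ := exists_flatMap_range_eq_append (fun k => (t (k + 1)).drop (q - 1)) hjm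
  have hV : (spre (t 1) (q - 1) ++ (List.range i).flatMap fun k => (t (k + 1)).drop (q - 1)).length
      = (q - 1) + ∑ k ∈ Finset.Ico 1 (i + 1), ((t k).drop (q - 1)).length := by
    rw [List.length_append, length_flatMap_range_succ (fun k => (t k).drop (q - 1)), spre,
      List.length_take, min_eq_left ht]
  rw [← Finset.Ico_add_one_right_eq_Icc 1 (i + 1),
    Finset.sum_Ico_succ_top (by omega : 1 ≤ i + 1), ← add_assoc, ← hV, hY, ← List.append_assoc,
    card_filter_Occ_append _ _ _ _ hP hq (by rw [hV]; omega), ssuf_chain_append_drop t hchain i hjm]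

end Strings

section DerivationTree

variable (S : SLP α)

lemma val_of_rule_eq_inl {i : Fin S.n} {a : α} (h : S.rule i = Sum.inl a) : S.val i = [a] := by
  rw [val]
  split <;> simp_all

lemma val_of_rule_eq_inr {i : Fin S.n} {jk : Fin S.n × Fin S.n} (h : S.rule i = Sum.inr jk) :
    S.val i = S.val jk.1 ++ S.val jk.2 := by
  rw [val]
  split <;> simp_all

lemma length_val_pos (i : Fin S.n) : 0 < (S.val i).length := by
  rcases h : S.rule i with a | jk
  · simp [S.val_of_rule_eq_inl h]
  · have := (S.wf i jk h).1
    have := length_val_pos jk.1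
    simp only [S.val_of_rule_eq_inr h, List.length_append]
    omega
termination_by i.val

lemma descend_append (p₁ p₂ : List Bool) (i : Fin S.n) :
    S.descend i (p₁ ++ p₂) = (S.descend i p₁).bind fun k => S.descend k p₂ := by
  induction p₁ generalizing i with
  | nil => simp [descend]
  | cons b p ih =>
    rw [List.cons_append, descend, descend]
    rcases S.rule i with a | jk
    · rfl
    · exact ih _

lemma offsetFrom_append {p₁ : List Bool} (p₂ : List Bool) {i k : Fin S.n}
    (h : S.descend i p₁ = some k) :
    S.offsetFrom i (p₁ ++ p₂) = S.offsetFrom i p₁ + S.offsetFrom k p₂ := by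
  induction p₁ generalizing i with
  | nil =>
    obtain rfl : i = k := by simpa [descend] using h
    simp [offsetFrom]
  | cons b p ih =>
    rw [descend] at h
    rcases hr : S.rule i with a | jk
    · simp [hr] at h
    · rw [hr] at h
      rw [List.cons_append, offsetFrom, offsetFrom, hr]
      cases b
      · simpa using ih h
      · simp only [if_true]
        rw [ih (i := jk.2) h, add_assoc]

lemma descend_spec {p : List Bool} {i j : Fin S.n} (h : S.descend i p = some j) :
    S.offsetFrom i p + (S.val j).length ≤ (S.val i).length ∧
      ((S.val i).drop (S.offsetFrom i p)).take (S.val j).length = S.val j := by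
  induction p generalizing i with
  | nil =>
    obtain rfl : i = j := by simpa [descend] using h
    simp [offsetFrom]
  | cons b p ih =>
    rw [descend] at h
    rcases hr : S.rule i with a | jk
    · simp [hr] at h
    · rw [hr] at h
      obtain ⟨hle, htake⟩ := ih h
      rw [offsetFrom, hr, S.val_of_rule_eq_inr hr]
      cases b
      · simp only [Bool.false_eq_true, if_false] at hle htake ⊢
        refine ⟨by simp only [List.length_append]; omega, ?_⟩
        rw [List.drop_append_of_le_length (by omega),
          List.take_append_of_le_length (by simp only [List.length_drop]; omega), htake]
      · simp only [if_true] at hle htake ⊢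
        exact ⟨by simp only [List.length_append]; omega,
          by rw [List.drop_length_add_append, htake]⟩

lemma nodeVar_spec {p : List Bool} {i : Fin S.n} (h : S.nodeVar p = some i) :
    S.offset p + (S.val i).length ≤ S.text.length ∧
      (S.text.drop (S.offset p)).take (S.val i).length = S.val i :=
  S.descend_spec h

variable {S}

lemma nodeVar_append_false {p : List Bool} {i : Fin S.n} {jk : Fin S.n × Fin S.n}
    (h : S.nodeVar p = some i) (hr : S.rule i = Sum.inr jk) :
    S.nodeVar (p ++ [false]) = some jk.1 := by
  rw [nodeVar, descend_append, ← nodeVar, h]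
  simp [descend, hr]

lemma nodeVar_append_true {p : List Bool} {i : Fin S.n} {jk : Fin S.n × Fin S.n}
    (h : S.nodeVar p = some i) (hr : S.rule i = Sum.inr jk) :
    S.nodeVar (p ++ [true]) = some jk.2 := by
  rw [nodeVar, descend_append, ← nodeVar, h]
  simp [descend, hr]

lemma offset_append_false {p : List Bool} {i : Fin S.n} {jk : Fin S.n × Fin S.n}
    (h : S.nodeVar p = some i) (hr : S.rule i = Sum.inr jk) :
    S.offset (p ++ [false]) = S.offset p := by
  rw [offset, S.offsetFrom_append _ h]
  simp [offsetFrom, hr, offset]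

lemma offset_append_true {p : List Bool} {i : Fin S.n} {jk : Fin S.n × Fin S.n}
    (h : S.nodeVar p = some i) (hr : S.rule i = Sum.inr jk) :
    S.offset (p ++ [true]) = S.offset p + (S.val jk.1).length := by
  rw [offset, S.offsetFrom_append _ h]
  simp [offsetFrom, hr, offset]

lemma itv_of_nodeVar {p : List Bool} {i : Fin S.n} (h : S.nodeVar p = some i) :
    S.itv p = Finset.Icc (S.offset p + 1) (S.offset p + (S.val i).length) := by
  rw [itv, h]

lemma exists_nodeVar_of_mem_itv {p : List Bool} {x : ℕ} (h : x ∈ S.itv p) :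
    ∃ i, S.nodeVar p = some i := by
  rw [itv] at h
  rcases hv : S.nodeVar p with _ | i
  · simp [hv] at h
  · exact ⟨i, rfl⟩

lemma offset_bounds_of_prefix {p p' : List Bool} {i' : Fin S.n} (hpre : p <+: p')
    (h' : S.nodeVar p' = some i') :
    ∃ i, S.nodeVar p = some i ∧ S.offset p ≤ S.offset p' ∧
      S.offset p' + (S.val i').length ≤ S.offset p + (S.val i).length := by
  obtain ⟨s, rfl⟩ := hpre
  rw [nodeVar, descend_append] at h'
  rcases hi : S.descend S.lastIdx p with _ | i
  · simp [hi] at h'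
  · rw [hi, Option.bind_some] at h'
    have := (S.descend_spec h').1
    rw [offset, offset, S.offsetFrom_append s hi]
    exact ⟨i, hi, by omega, by omega⟩

lemma offset_bounds_of_left_descendant {p s : List Bool} {i i' : Fin S.n}
    {jk : Fin S.n × Fin S.n} (hv : S.nodeVar p = some i) (hr : S.rule i = Sum.inr jk)
    (h' : S.nodeVar (p ++ false :: s) = some i') :
    S.offset p ≤ S.offset (p ++ false :: s) ∧
      S.offset (p ++ false :: s) + (S.val i').length ≤ S.offset p + (S.val jk.1).length := by
  obtain ⟨k, hk, hle₁, hle₂⟩ := offset_bounds_of_prefix (p := p ++ [false]) ⟨s, by simp⟩ h'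
  obtain rfl : jk.1 = k := Option.some_inj.mp ((nodeVar_append_false hv hr).symm.trans hk)
  rw [offset_append_false hv hr] at hle₁ hle₂
  exact ⟨hle₁, hle₂⟩

lemma offset_bounds_of_right_descendant {p s : List Bool} {i i' : Fin S.n}
    {jk : Fin S.n × Fin S.n} (hv : S.nodeVar p = some i) (hr : S.rule i = Sum.inr jk)
    (h' : S.nodeVar (p ++ true :: s) = some i') :
    S.offset p + (S.val jk.1).length ≤ S.offset (p ++ true :: s) ∧
      S.offset (p ++ true :: s) + (S.val i').length ≤ S.offset p + (S.val i).length := by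
  obtain ⟨k, hk, hle₁, hle₂⟩ := offset_bounds_of_prefix (p := p ++ [true]) ⟨s, by simp⟩ h'
  obtain rfl : jk.2 = k := Option.some_inj.mp ((nodeVar_append_true hv hr).symm.trans hk)
  rw [offset_append_true hv hr] at hle₁ hle₂
  have := S.val_of_rule_eq_inr hr
  exact ⟨hle₁, by simp_all; omega⟩

lemma itv_subset_of_prefix {p p' : List Bool} (hpre : p <+: p') : S.itv p' ⊆ S.itv p := by
  intro x hx
  obtain ⟨i', h'⟩ := exists_nodeVar_of_mem_itv hx
  obtain ⟨i, hi, hle₁, hle₂⟩ := offset_bounds_of_prefix hpre h'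
  rw [itv_of_nodeVar h', Finset.mem_Icc] at hx
  rw [itv_of_nodeVar hi, Finset.mem_Icc]
  omega

end DerivationTree

lemma exists_append_cons_of_not_prefix :
    ∀ p p' : List Bool, ¬ p <+: p' → ¬ p' <+: p →
      ∃ r b s s', p = r ++ b :: s ∧ p' = r ++ (!b) :: s'
  | [], _, h, _ => absurd List.nil_prefix h
  | _ :: _, [], _, h' => absurd List.nil_prefix h'
  | a :: p, a' :: p', h, h' => by
    by_cases hab : a = a'
    · subst hab
      simp only [List.cons_prefix_cons, true_and] at h h'
      obtain ⟨r, b, s, s', rfl, rfl⟩ := exists_append_cons_of_not_prefix p p' h h'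
      exact ⟨a :: r, b, s, s', rfl, rfl⟩
    · refine ⟨[], a, p, p', rfl, ?_⟩
      cases a <;> cases a' <;> simp_all

-- The intervals of the two children of a node are disjoint.
lemma prefix_or_prefix_of_mem_itv {S : SLP α} {p p' : List Bool} {x : ℕ}
    (h : x ∈ S.itv p) (h' : x ∈ S.itv p') : p <+: p' ∨ p' <+: p := by
  by_contra! hc
  obtain ⟨r, b, s, s', rfl, rfl⟩ := exists_append_cons_of_not_prefix p p' hc.1 hc.2
  have hx : x ∈ S.itv (r ++ [false]) ∧ x ∈ S.itv (r ++ [true]) := by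
    have hb : x ∈ S.itv (r ++ [b]) := itv_subset_of_prefix ⟨s, by simp⟩ h
    have hb' : x ∈ S.itv (r ++ [!b]) := itv_subset_of_prefix ⟨s', by simp⟩ h'
    cases b
    · exact ⟨hb, hb'⟩
    · exact ⟨hb', hb⟩
  obtain ⟨hl, hr'⟩ := hx
  obtain ⟨i₀, hi₀⟩ := exists_nodeVar_of_mem_itv hl
  obtain ⟨i, hi, -⟩ := offset_bounds_of_prefix ⟨[false], rfl⟩ hi₀
  rcases hr : S.rule i with a | jk
  · rw [nodeVar, descend_append, ← nodeVar, hi] at hi₀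
    simp [descend, hr] at hi₀
  rw [itv_of_nodeVar (nodeVar_append_false hi hr), offset_append_false hi hr,
    Finset.mem_Icc] at hl
  rw [itv_of_nodeVar (nodeVar_append_true hi hr), offset_append_true hi hr,
    Finset.mem_Icc] at hr'
  omega

section Windows

variable {S : SLP α}

lemma tstr_eq_substr {q : ℕ} (hq : 1 ≤ q) {p : List Bool} {i : Fin S.n}
    {jk : Fin S.n × Fin S.n} (hv : S.nodeVar p = some i) (hr : S.rule i = Sum.inr jk) :
    S.tstr q i = substr S.text
      (max (S.offset p + 1) (S.offset p + (S.val jk.1).length + 2 - q))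
      (min (S.offset p + (S.val jk.1).length + q - 1) (S.offset p + (S.val i).length)) := by
  obtain ⟨-, hleft⟩ := S.nodeVar_spec (nodeVar_append_false hv hr)
  obtain ⟨hT, hright⟩ := S.nodeVar_spec (nodeVar_append_true hv hr)
  rw [offset_append_false hv hr] at hleft
  rw [offset_append_true hv hr] at hT hright
  have hlen : (S.val i).length = (S.val jk.1).length + (S.val jk.2).length := by
    rw [S.val_of_rule_eq_inr hr, List.length_append]
  have hpos := S.length_val_pos jk.1
  simp only [tstr, hr]
  rw [substr_append S.text (c := S.offset p + (S.val jk.1).length) (by omega) (by omega)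
    (by omega)]
  congr 1
  · conv_lhs => rw [← hleft]
    rw [ssuf, List.length_take, List.length_drop, min_eq_left (by omega), List.drop_take,
      List.drop_drop, substr]
    congr 1
    · omega
    · congr 1
      omega
  · conv_lhs => rw [← hright]
    rw [spre, List.take_take, substr]
    congr 1
    omega

lemma exists_rule_eq_inr_of_stabs {p : List Bool} {b e : ℕ} {i : Fin S.n} (hbe : b < e)
    (hs : S.Stabs p b e) (hv : S.nodeVar p = some i) : ∃ jk, S.rule i = Sum.inr jk := by
  rcases hr : S.rule i with a | jk
  · have hsub := hs.2.1
    rw [itv_of_nodeVar hv, S.val_of_rule_eq_inl hr, Finset.Icc_subset_Icc_iff hbe.le] at hsub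
    simp only [List.length_singleton] at hsub
    omega
  · exact ⟨jk, rfl⟩

-- The split point `offset p + |val ℓ|` of `ξ(b, e)` lies in `[b, e)`, since otherwise a child
-- would contain `[b:e]`.
lemma split_mem_of_stabs {p : List Bool} {b e : ℕ} {i : Fin S.n} {jk : Fin S.n × Fin S.n}
    (hbe : b ≤ e) (hs : S.Stabs p b e) (hv : S.nodeVar p = some i)
    (hr : S.rule i = Sum.inr jk) :
    S.offset p + 1 ≤ b ∧ b ≤ S.offset p + (S.val jk.1).length ∧
      S.offset p + (S.val jk.1).length < e ∧ e ≤ S.offset p + (S.val i).length := by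
  obtain ⟨-, hsub, hdeep⟩ := hs
  have hchild : ∀ c : Bool, ¬ Finset.Icc b e ⊆ S.itv (p ++ [c]) := fun c =>
    hdeep _ ⟨[c], rfl⟩ (by simp) (by cases c <;> simp [IsNode, nodeVar_append_false hv hr,
      nodeVar_append_true hv hr])
  have hleft := hchild false
  have hright := hchild true
  rw [itv_of_nodeVar hv, Finset.Icc_subset_Icc_iff hbe] at hsub
  rw [itv_of_nodeVar (nodeVar_append_false hv hr), offset_append_false hv hr,
    Finset.Icc_subset_Icc_iff hbe] at hleft
  rw [itv_of_nodeVar (nodeVar_append_true hv hr), offset_append_true hv hr,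
    Finset.Icc_subset_Icc_iff hbe] at hright
  have hlen : (S.val i).length = (S.val jk.1).length + (S.val jk.2).length := by
    rw [S.val_of_rule_eq_inr hr, List.length_append]
  omega

-- The two nodes are nested. Either `ξ(u+1, u+q)` lies in the right subtree of `ξ(u, u+q-1)`,
-- whose split point is then `u`, or `ξ(u, u+q-1)` lies in the left subtree of `ξ(u+1, u+q)`,
-- whose split point is then `u+q-1`.
lemma window_bounds_of_stabs_succ {q u : ℕ} (hq : 2 ≤ q) {p p' : List Bool} {i j : Fin S.n}
    {jk jk' : Fin S.n × Fin S.n} (hpp : p ≠ p')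
    (hs : S.Stabs p u (u + q - 1)) (hv : S.nodeVar p = some i) (hr : S.rule i = Sum.inr jk)
    (hs' : S.Stabs p' (u + 1) (u + q)) (hv' : S.nodeVar p' = some j)
    (hr' : S.rule j = Sum.inr jk') :
    min (S.offset p + (S.val jk.1).length + q - 1) (S.offset p + (S.val i).length)
        = u + q - 1 ∧
      max (S.offset p' + 1) (S.offset p' + (S.val jk'.1).length + 2 - q) = u + 1 := by
  have hb := split_mem_of_stabs (by omega) hs hv hr
  have hb' := split_mem_of_stabs (by omega) hs' hv' hr'
  have hmem : u + 1 ∈ S.itv p := by rw [itv_of_nodeVar hv, Finset.mem_Icc]; omega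
  have hmem' : u + 1 ∈ S.itv p' := by rw [itv_of_nodeVar hv', Finset.mem_Icc]; omega
  rcases prefix_or_prefix_of_mem_itv hmem hmem' with ⟨s, rfl⟩ | ⟨s, rfl⟩
  · rcases s with _ | ⟨_ | _, s⟩
    · simp at hpp
    · have := offset_bounds_of_left_descendant hv hr hv'
      omega
    · have := offset_bounds_of_right_descendant hv hr hv'
      omega
  · rcases s with _ | ⟨_ | _, s⟩
    · simp at hpp
    · have := offset_bounds_of_left_descendant hv' hr' hv
      omega
    · have := offset_bounds_of_right_descendant hv' hr' hv
      omega

lemma ssuf_tstr_eq_spre_tstr_of_rightNbr {q : ℕ} (hq : 2 ≤ q) {i j : Fin S.n}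
    (h : S.RightNbr q i j) : ssuf (S.tstr q i) (q - 1) = spre (S.tstr q j) (q - 1) := by
  obtain ⟨hij, u, p, p', -, -, hs, hv, hs', hv'⟩ := h
  obtain ⟨jk, hr⟩ := exists_rule_eq_inr_of_stabs (by omega) hs hv
  obtain ⟨jk', hr'⟩ := exists_rule_eq_inr_of_stabs (by omega) hs' hv'
  have hpp : p ≠ p' := by
    rintro rfl
    exact hij (Option.some_inj.mp (hv.symm.trans hv'))
  obtain ⟨hend, hstart⟩ := window_bounds_of_stabs_succ hq hpp hs hv hr hs' hv' hr'
  have hb := split_mem_of_stabs (by omega) hs hv hr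
  have hb' := split_mem_of_stabs (by omega) hs' hv' hr'
  have hT := (S.nodeVar_spec hv).1
  rw [tstr_eq_substr (by omega) hv hr, tstr_eq_substr (by omega) hv' hr', hend, hstart,
    ssuf_substr _ (by omega) (by omega) (by omega) (by omega), spre_substr _ (by omega)]
  congr 1 <;> omega

lemma spre_tstr_eq_substr_of_stabs {q : ℕ} (hq : 2 ≤ q) {p : List Bool} {i : Fin S.n}
    (hs : S.Stabs p 1 q) (hv : S.nodeVar p = some i) :
    spre (S.tstr q i) (q - 1) = substr S.text 1 (q - 1) := by
  obtain ⟨jk, hr⟩ := exists_rule_eq_inr_of_stabs (by omega) hs hv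
  have hb := split_mem_of_stabs (by omega) hs hv hr
  rw [tstr_eq_substr (by omega) hv hr, spre_substr _ (by omega)]
  congr 1 <;> omega

end Windows

end SLP

theorem stmt10_general {α : Type} [DecidableEq α] (q : ℕ) (hq : 2 ≤ q) (S : SLP α)
    (hT : q ≤ S.text.length)
    (m : ℕ) (idx : ℕ → Fin S.n)
    (p : List Bool) (hstab : S.Stabs p 1 q) (hvar : S.nodeVar p = some (idx 1))
    (hnbr : ∀ j, 2 ≤ j → j ≤ m → S.RightNbr q (idx (j - 1)) (idx j))
    (W : List α)
    (hW : W = SLP.substr S.text 1 (q - 1) ++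
      (List.range m).flatMap (fun k => S.labelStr q (idx (k + 1))))
    (B : ℕ → Finset ℕ)
    (hB : ∀ j, B j = Finset.Icc
      ((q - 1) + (∑ t ∈ Finset.Ico 1 j, (S.labelStr q (idx t)).length) + 1)
      ((q - 1) + ∑ t ∈ Finset.Icc 1 j, (S.labelStr q (idx t)).length))
    (P : List α) (hP : P.length = q) :
    (∀ j, 1 ≤ j → j ≤ m →
      ((SLP.Occ W P).filter (fun k => k + q - 1 ∈ B j)).card
        = (SLP.Occ (S.tstr q (idx j)) P).card) ∧
    (∑ j ∈ Finset.Icc 1 m, S.vOcc (idx j) *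
        ((SLP.Occ W P).filter (fun k => k + q - 1 ∈ B j)).card
      = ∑ j ∈ Finset.Icc 1 m, S.vOcc (idx j) *
          (SLP.Occ (S.tstr q (idx j)) P).card) := by
  have hbase := SLP.spre_tstr_eq_substr_of_stabs hq hstab hvar
  have hchain : ∀ j, 1 ≤ j → j < m →
      SLP.ssuf (S.tstr q (idx j)) (q - 1) = SLP.spre (S.tstr q (idx (j + 1))) (q - 1) :=
    fun j _ hjm => by
      simpa using SLP.ssuf_tstr_eq_spre_tstr_of_rightNbr hq (hnbr (j + 1) (by omega) hjm)
  have hlen : q - 1 ≤ (S.tstr q (idx 1)).length := by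
    have := congrArg List.length hbase
    rw [SLP.spre, List.length_take, SLP.length_substr _ le_rfl (by omega)] at this
    omega
  have hblocks : ∀ j, 1 ≤ j → j ≤ m →
      ((SLP.Occ W P).filter (fun k => k + q - 1 ∈ B j)).card
        = (SLP.Occ (S.tstr q (idx j)) P).card := by
    intro j hj hjm
    rw [hW, hB, ← hbase]
    exact SLP.card_filter_Occ_chain (fun j => S.tstr q (idx j)) hP (by omega) hlen hchain
      hj hjm
  refine ⟨hblocks, Finset.sum_congr rfl fun j hj => ?_⟩
  rw [Finset.mem_Icc] at hj
  rw [hblocks j hj.1 hj.2]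

/-- Lemma 7 of the paper: for a directed path
`X_{i₁}, …, X_{i_m}` in the right `q`-gram neighbor graph starting at the
variable stabbing `[1:q]`, consider
`W = T([1:q-1]) label(X_{i₁}) ⋯ label(X_{i_m})` with `B_j` the block of
positions of `label(X_{i_j})` in `W`.  Then for every `q`-gram `P` and every
`j`, the number of occurrences of `P` in `W` ending in `B_j` equals
`|Occ(t_{i_j},P)|`; consequently the `vOcc`-weighted `q`-gram frequencies on
`W` equal the weighted `q`-gram frequencies of the strings `t_{i_j}`. -/
theorem stmt10 {α : Type} [DecidableEq α] (q : ℕ) (hq : 2 ≤ q) (S : SLP α)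
    (hT : q ≤ S.text.length)
    (m : ℕ) (hm : 1 ≤ m) (idx : ℕ → Fin S.n)
    (p : List Bool) (hstab : S.Stabs p 1 q) (hvar : S.nodeVar p = some (idx 1))
    (hnbr : ∀ j, 2 ≤ j → j ≤ m → S.RightNbr q (idx (j - 1)) (idx j))
    (W : List α)
    (hW : W = SLP.substr S.text 1 (q - 1) ++
      (List.range m).flatMap (fun k => S.labelStr q (idx (k + 1))))
    (B : ℕ → Finset ℕ)
    (hB : ∀ j, B j = Finset.Icc
      ((q - 1) + (∑ t ∈ Finset.Ico 1 j, (S.labelStr q (idx t)).length) + 1)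
      ((q - 1) + ∑ t ∈ Finset.Icc 1 j, (S.labelStr q (idx t)).length))
    (P : List α) (hP : P.length = q) :
    (∀ j, 1 ≤ j → j ≤ m →
      ((SLP.Occ W P).filter (fun k => k + q - 1 ∈ B j)).card
        = (SLP.Occ (S.tstr q (idx j)) P).card) ∧
    (∑ j ∈ Finset.Icc 1 m, S.vOcc (idx j) *
        ((SLP.Occ W P).filter (fun k => k + q - 1 ∈ B j)).card
      = ∑ j ∈ Finset.Icc 1 m, S.vOcc (idx j) *
          (SLP.Occ (S.tstr q (idx j)) P).card) :=
  stmt10_general q hq S hT m idx p hstab hvar hnbr W hW B hB P hP
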